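/- For real α ∈ [0,1), real θ > -α, and positive integers n, m, the sum ∑_{i=1}^m C(m,i) · (1-α)_{i-1} · (θ+α)_{n+m-i} equals (θ+1)_{n-1} · (θ+n)_m · ∑_{i=1}^m (θ+α)_{n+i-1}/(θ+1)_{n+i-1}. -/
import Mathlib


open Finset Real Filter

noncomputable def rf (x : ℝ) (m : ℕ) : ℝ := (ascPochhammer ℝ m).eval x

lemma rf_zero (x : ℝ) : rf x 0 = 1 := by simp [rf]

lemma rf_succ (x : ℝ) (k : ℕ) : rf x (k + 1) = rf x k * (x + k) := by
  simp [rf, ascPochhammer_succ_eval]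

lemma rf_add (x : ℝ) (n k : ℕ) : rf x (n + k) = rf x n * rf (x + n) k := by
  have h := congrArg (Polynomial.eval x) (ascPochhammer_mul (S := ℝ) n k)
  simpa [rf, Polynomial.eval_comp] using h.symm

lemma rf_pos (x : ℝ) (hx : 0 < x) (k : ℕ) : 0 < rf x k :=
  ascPochhammer_pos k x hx

/-- Recurrence for the left-hand sum. -/
lemma Lrec (a b : ℝ) (n m : ℕ) :
    ∑ j ∈ range (m + 1), (((m + 1).choose (j + 1)) : ℝ) * rf b j * rf a (n + (m + 1) - (j + 1))
      = rf a (n + m) + (a + b + n + m - 1) *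
        ∑ j ∈ range m, ((m.choose (j + 1)) : ℝ) * rf b j * rf a (n + m - (j + 1)) := by
  have e1 : ∀ j, n + (m + 1) - (j + 1) = n + m - j := by omega
  simp only [e1, Nat.choose_succ_succ, Nat.cast_add, add_mul]
  rw [Finset.sum_add_distrib]
  have hA : ∑ j ∈ range (m + 1), ((m.choose (j + 1)) : ℝ) * rf b j * rf a (n + m - j)
      = ∑ j ∈ range m, ((m.choose (j + 1)) : ℝ) * rf b j * rf a (n + m - j) := by
    rw [Finset.sum_range_succ, Nat.choose_succ_self]
    simp
  have hB : ∑ j ∈ range (m + 1), ((m.choose j) : ℝ) * rf b j * rf a (n + m - j)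
      = rf a (n + m) + ((a + b + n + m - 1) *
          ∑ j ∈ range m, ((m.choose (j + 1)) : ℝ) * rf b j * rf a (n + m - (j + 1))
        - ∑ j ∈ range m, ((m.choose (j + 1)) : ℝ) * rf b j * rf a (n + m - j)) := by
    rw [Finset.sum_range_succ']
    simp only [Nat.choose_zero_right, Nat.cast_one, one_mul, rf_zero, Nat.sub_zero]
    rw [add_comm]
    congr 1
    rw [Finset.mul_sum, ← Finset.sum_sub_distrib]
    apply Finset.sum_congr rfl
    intro k hk
    have hk' : k < m := Finset.mem_range.mp hk
    have h1 : n + m - (k + 1) + 1 = n + m - k := by omega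
    have h2 : rf a (n + m - k) = rf a (n + m - (k + 1)) * (a + (n + m - (k + 1) : ℕ)) := by
      rw [← h1, rf_succ]
    have hc : ((n + m - (k + 1) : ℕ) : ℝ) = (n : ℝ) + m - (k + 1) := by
      push_cast [Nat.cast_sub (by omega : k + 1 ≤ n + m)]
      ring
    rw [rf_succ, h2, hc]
    ring
  rw [hA, hB]
  ring

/-- The key combinatorial identity. -/
lemma key (a b : ℝ) (n : ℕ) : ∀ m : ℕ,
    ∑ j ∈ range m, ((m.choose (j + 1)) : ℝ) * rf b j * rf a (n + m - (j + 1))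
      = ∑ j ∈ range m, rf a (n + j) * rf (a + b + n + j) (m - (j + 1)) := by
  intro m
  induction m with
  | zero => simp
  | succ m ih =>
    rw [Lrec, ih, Finset.sum_range_succ]
    have hlast : rf a (n + m) * rf (a + b + n + m) (m + 1 - (m + 1)) = rf a (n + m) := by
      simp [rf_zero]
    rw [hlast]
    have hrest : ∑ j ∈ range m, rf a (n + j) * rf (a + b + n + j) (m + 1 - (j + 1))
        = (a + b + n + m - 1) * ∑ j ∈ range m, rf a (n + j) * rf (a + b + n + j) (m - (j + 1)) := by
      rw [Finset.mul_sum]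
      apply Finset.sum_congr rfl
      intro j hj
      have hj' : j < m := Finset.mem_range.mp hj
      have h1 : m + 1 - (j + 1) = (m - (j + 1)) + 1 := by omega
      have hc : ((m - (j + 1) : ℕ) : ℝ) = (m : ℝ) - (j + 1) := by
        push_cast [Nat.cast_sub (by omega : j + 1 ≤ m)]
        ring
      rw [h1, rf_succ, hc]
      ring
    rw [hrest]
    ring

theorem stmt4 (α θ : ℝ) (h0 : 0 ≤ α) (h1 : α < 1) (hθ : -α < θ) (n m : ℕ)
    (hn : 1 ≤ n) (hm : 1 ≤ m) :
    ∑ i ∈ Finset.Icc 1 m, (m.choose i : ℝ) * rf (1 - α) (i - 1) * rf (θ + α) (n + m - i)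
      = rf (θ + 1) (n - 1) * rf (θ + n) m
          * ∑ i ∈ Finset.Icc 1 m, rf (θ + α) (n + i - 1) / rf (θ + 1) (n + i - 1) := by
  set a := θ + α with ha
  set b := 1 - α with hb
  have hab : a + b = θ + 1 := by rw [ha, hb]; ring
  have hθ1 : (0 : ℝ) < θ + 1 := by linarith
  -- convert Icc sums to range sums
  have hIcc : Finset.Icc 1 m = Finset.Ico 1 (m + 1) := by
    rw [Finset.Ico_add_one_right_eq_Icc]
  rw [hIcc, Finset.sum_Ico_eq_sum_range, Finset.sum_Ico_eq_sum_range]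
  simp only [Nat.add_sub_cancel]
  have hL' : ∀ j, (1 : ℕ) + j - 1 = j := fun j => by omega
  have hL'' : ∀ j, n + m - (1 + j) = n + m - (j + 1) := fun j => by omega
  have hL''' : ∀ j, n + (1 + j) - 1 = n + j := fun j => by omega
  simp only [hL', hL'', hL''']
  have hch : ∀ j, (m.choose (1 + j) : ℝ) = (m.choose (j + 1) : ℝ) := fun j => by
    rw [add_comm]
  simp only [hch]
  rw [key a b n m]
  rw [Finset.mul_sum]
  apply Finset.sum_congr rfl
  intro j hj
  have hj' : j < m := Finset.mem_range.mp hj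
  -- show rf (θ+1) (n-1) * rf (θ+n) m * (rf a (n+j) / rf (θ+1) (n+j))
  --      = rf a (n+j) * rf (a+b+n+j) (m-(j+1))
  have hpos : (0 : ℝ) < rf (θ + 1) (n + j) := rf_pos _ hθ1 _
  have hfact : rf (θ + 1) (n - 1) * rf (θ + n) m = rf (θ + 1) (n + j) * rf (a + b + n + j) (m - (j + 1)) := by
    have h1 : rf (θ + 1) (n - 1 + m) = rf (θ + 1) (n - 1) * rf (θ + 1 + (n - 1 : ℕ)) m :=
      rf_add _ _ _
    have hc1 : ((n - 1 : ℕ) : ℝ) = (n : ℝ) - 1 := by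
      push_cast [Nat.cast_sub hn]; ring
    have h1' : θ + 1 + ((n - 1 : ℕ) : ℝ) = θ + n := by rw [hc1]; ring
    rw [h1'] at h1
    have h2 : rf (θ + 1) (n + j + (m - (j + 1))) = rf (θ + 1) (n + j) * rf (θ + 1 + (n + j : ℕ)) (m - (j + 1)) :=
      rf_add _ _ _
    have h2' : θ + 1 + ((n + j : ℕ) : ℝ) = a + b + n + j := by push_cast; rw [hab]; ring
    rw [h2'] at h2
    have he : n - 1 + m = n + j + (m - (j + 1)) := by omega
    rw [← h1, ← h2, he]
  rw [hfact]
  field_simp
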